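/- arXiv:1801.07235 — 3 statements merged into one kernel-verified Lean document; each statement's English description precedes it below -/
import Mathlib

section
/- Let U = {U_i}_{i∈I} be a cover of a finite poset X by lower sets, and let (J, C) be an element of the completion poset Ĥ(U) (so C is a connected component of W_J ≠ ∅). Then for every subset J' ⊆ J there exists a unique connected component C' of W_{J'} with C ⊆ C'. Consequently, the map J' ↦ (J', C') is an order isomorphism from the poset of subsets of J onto the lower set { (J',C') ∈ Ĥ(U) : (J',C') ≤ (J,C) } of Ĥ(U). -/
/-- The comparability relation inside a subset `U` of a poset. -/
def posetCompRel {X : Type*} [PartialOrder X] (U : Set X) (a b : X) : Prop :=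
  a ∈ U ∧ b ∈ U ∧ (a ≤ b ∨ b ≤ a)

/-- `C` is a connected component of `U` (w.r.t. the equivalence relation generated by
comparability inside `U`). -/
def IsComponent {X : Type*} [PartialOrder X] (U C : Set X) : Prop :=
  ∃ u ∈ U, C = {z | z ∈ U ∧ Relation.EqvGen (posetCompRel U) u z}

/-- A pair `(J, C)` is a valid element of the completion poset `Ĥ(U)` if
`W_J = ⋂_{i ∈ J} U_i` is nonempty and `C` is a connected component of `W_J`. -/
def ValidPair {X I : Type*} [PartialOrder X] (Uc : I → Set X)
    (p : Set I × Set X) : Prop :=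
  (⋂ i ∈ p.1, Uc i).Nonempty ∧ IsComponent (⋂ i ∈ p.1, Uc i) p.2

/-- The order of the completion poset: `(J, C) ≤ (J', C')` iff `J ⊆ J'` and `C' ⊆ C`. -/
def cylLeP {X I : Type*} (p q : Set I × Set X) : Prop :=
  p.1 ⊆ q.1 ∧ q.2 ⊆ p.2

/-! Since `W_{J'} ⊇ W_J` for `J' ⊆ J`, the statement is an instance of a general fact about
components: a component `C` of `U ⊆ V` lies in exactly one component of `V`, and components
containing `C` of nested sets are nested. -/

section Components

variable {X : Type*} [PartialOrder X] {U V C D : Set X}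

lemma posetCompRel_mono (hUV : U ⊆ V) {a b : X} (h : posetCompRel U a b) :
    posetCompRel V a b :=
  ⟨hUV h.1, hUV h.2.1, h.2.2⟩

lemma IsComponent.nonempty (hC : IsComponent U C) : C.Nonempty := by
  obtain ⟨u, hu, rfl⟩ := hC
  exact ⟨u, hu, Relation.EqvGen.refl u⟩

lemma IsComponent.subset_of_inter_nonempty (hC : IsComponent U C) (hD : IsComponent V D)
    (hUV : U ⊆ V) (hCD : (C ∩ D).Nonempty) : C ⊆ D := by
  obtain ⟨u, -, rfl⟩ := hC
  obtain ⟨v, -, rfl⟩ := hD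
  obtain ⟨w, ⟨-, huw⟩, ⟨-, hvw⟩⟩ := hCD
  rintro z ⟨hzU, huz⟩
  have hwz : Relation.EqvGen (posetCompRel V) w z :=
    Relation.EqvGen.mono (fun _ _ => posetCompRel_mono hUV) _ _ (huw.symm.trans _ _ _ huz)
  exact ⟨hUV hzU, hvw.trans _ _ _ hwz⟩

lemma IsComponent.exists_superset (hC : IsComponent U C) (hUV : U ⊆ V) :
    ∃ D, IsComponent V D ∧ C ⊆ D := by
  obtain ⟨u, hu, rfl⟩ := hC
  exact ⟨_, ⟨u, hUV hu, rfl⟩, fun z ⟨hzU, huz⟩ =>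
    ⟨hUV hzU, Relation.EqvGen.mono (fun _ _ => posetCompRel_mono hUV) _ _ huz⟩⟩

lemma IsComponent.existsUnique_superset (hC : IsComponent U C) (hUV : U ⊆ V) :
    ∃! D, IsComponent V D ∧ C ⊆ D := by
  obtain ⟨D, hD, hCD⟩ := hC.exists_superset hUV
  obtain ⟨u, hu⟩ := hC.nonempty
  refine ⟨D, ⟨hD, hCD⟩, fun E ⟨hE, hCE⟩ => ?_⟩
  exact (hE.subset_of_inter_nonempty hD subset_rfl ⟨u, hCE hu, hCD hu⟩).antisymm
    (hD.subset_of_inter_nonempty hE subset_rfl ⟨u, hCD hu, hCE hu⟩)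

end Components

theorem stmt15_general {X I : Type*} [PartialOrder X] (Uc : I → Set X)
    (J : Set I) (C : Set X)
    (hC : IsComponent (⋂ i ∈ J, Uc i) C) :
    (∀ J' : Set I, J' ⊆ J →
      ∃! C' : Set X, IsComponent (⋂ i ∈ J', Uc i) C' ∧ C ⊆ C') ∧
    (∀ g : Set I → Set X,
      (∀ J' : Set I, J' ⊆ J → IsComponent (⋂ i ∈ J', Uc i) (g J') ∧ C ⊆ g J') →
      (∀ J₁ : Set I, J₁ ⊆ J → ∀ J₂ : Set I, J₂ ⊆ J →
        (J₁ ⊆ J₂ ↔ cylLeP (X := X) (J₁, g J₁) (J₂, g J₂))) ∧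
      (∀ (J' : Set I) (C' : Set X), ValidPair Uc (J', C') →
        cylLeP (X := X) (J', C') (J, C) → C' = g J')) := by
  have hunique : ∀ J' ⊆ J, ∃! C' : Set X, IsComponent (⋂ i ∈ J', Uc i) C' ∧ C ⊆ C' :=
    fun J' hJ' => hC.existsUnique_superset (Set.biInter_subset_biInter_left hJ')
  refine ⟨hunique, fun g hg => ⟨fun J₁ hJ₁ J₂ hJ₂ => ⟨fun h12 => ⟨h12, ?_⟩, And.left⟩,
    fun J' C' hC' hle => (hunique J' hle.1).unique ⟨hC'.2, hle.2⟩ (hg J' hle.1)⟩⟩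
  obtain ⟨u, hu⟩ := hC.nonempty
  exact (hg J₂ hJ₂).1.subset_of_inter_nonempty (hg J₁ hJ₁).1
    (Set.biInter_subset_biInter_left h12) ⟨u, (hg J₂ hJ₂).2 hu, (hg J₁ hJ₁).2 hu⟩

/-- For `(J, C) ∈ Ĥ(U)` and `J' ⊆ J` there is a unique component `C'` of `W_{J'}`
with `C ⊆ C'`; the map `J' ↦ (J', C')` is an order isomorphism from the powerset of
`J` onto the lower set of elements of `Ĥ(U)` below `(J, C)`. -/
theorem stmt15 {X I : Type*} [PartialOrder X] [Fintype X] (Uc : I → Set X)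
    (hl : ∀ i, IsLowerSet (Uc i)) (hcov : ∀ x : X, ∃ i, x ∈ Uc i)
    (J : Set I) (C : Set X)
    (hne : (⋂ i ∈ J, Uc i).Nonempty) (hC : IsComponent (⋂ i ∈ J, Uc i) C) :
    (∀ J' : Set I, J' ⊆ J →
      ∃! C' : Set X, IsComponent (⋂ i ∈ J', Uc i) C' ∧ C ⊆ C') ∧
    (∀ g : Set I → Set X,
      (∀ J' : Set I, J' ⊆ J → IsComponent (⋂ i ∈ J', Uc i) (g J') ∧ C ⊆ g J') →
      (∀ J₁ : Set I, J₁ ⊆ J → ∀ J₂ : Set I, J₂ ⊆ J →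
        (J₁ ⊆ J₂ ↔ cylLeP (X := X) (J₁, g J₁) (J₂, g J₂))) ∧
      (∀ (J' : Set I) (C' : Set X), ValidPair Uc (J', C') →
        cylLeP (X := X) (J', C') (J, C) → C' = g J')) :=
  stmt15_general Uc J C hC
end

section
/- Let U = {U_i}_{i∈I} be a cover of a finite poset X by lower sets, Ĥ(U) its completion poset, and consider the relation R ⊆ X × Ĥ(U)ᵒᵖ given by x R (J,C) iff x ∈ C. Then for every (J,C) ∈ Ĥ(U)ᵒᵖ, the open hull (in X) of R⁻¹(U_{(J,C)}) equals C, where U_{(J,C)} denotes the set of elements of Ĥ(U)ᵒᵖ below (J,C). -/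
/-- For the relation `x R (J, C)` iff `x ∈ C`, between `X` and `Ĥ(U)ᵒᵖ`, the open
hull of `R⁻¹(U_{(J,C)})` equals `C` (where `U_{(J,C)}` is the down-set of `(J,C)` in
`Ĥ(U)ᵒᵖ`, i.e. the up-set of `(J,C)` in `Ĥ(U)`). -/
theorem stmt16 {X I : Type*} [PartialOrder X] [Fintype X] (Uc : I → Set X)
    (hl : ∀ i, IsLowerSet (Uc i)) (hcov : ∀ x : X, ∃ i, x ∈ Uc i)
    (J : Set I) (C : Set X)
    (hne : (⋂ i ∈ J, Uc i).Nonempty) (hC : IsComponent (⋂ i ∈ J, Uc i) C) :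
    {x : X | ∃ a : X,
        (∃ q : Set I × Set X, ValidPair Uc q ∧ cylLeP (J, C) q ∧ a ∈ q.2) ∧
        x ≤ a} = C := by
  have hlow : ∀ (U C : Set X), IsLowerSet U → IsComponent U C → IsLowerSet C := by
    rintro U C hU ⟨u, hu, rfl⟩ x y hxy ⟨hyU, hrel⟩
    exact ⟨hU hxy hyU, hrel.trans _ _ _
      (Relation.EqvGen.rel _ _ ⟨hyU, hU hxy hyU, Or.inr hxy⟩)⟩
  have hWlow : IsLowerSet (⋂ i ∈ J, Uc i) := by
    intro a b hab ha
    simp only [Set.mem_iInter] at ha ⊢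
    exact fun i hi => hl i hab (ha i hi)
  have hClow : IsLowerSet C := hlow _ _ hWlow hC
  ext x
  constructor
  · rintro ⟨a, ⟨q, hq, ⟨_, hsub⟩, ha⟩, hxa⟩
    exact hClow hxa (hsub ha)
  · intro hx
    exact ⟨x, ⟨(J, C), ⟨hne, hC⟩, ⟨subset_rfl, subset_rfl⟩, hx⟩, le_rfl⟩
end

section
/- Let R ⊆ X × Y be a relation between finite posets and let y₁, …, yₙ be a linear extension of Y. Then for each 1 ≤ i ≤ n, the set of elements strictly below y_i in the subposet B(R) \ {y₁, …, y_{i−1}} equals the open hull (in X) of R⁻¹(U_{y_i}); i.e., removing the points of Y in reverse order of a linear extension, the down-set of each removed point at the time of removal consists only of elements of X and equals underline(R⁻¹(U_{y_i})). -/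
/-- The order relation of the cylinder `B(R)` of a relation `R ⊆ X × Y`. -/
def cylLe {X Y : Type*} [PartialOrder X] [PartialOrder Y] (R : X → Y → Prop) :
    X ⊕ Y → X ⊕ Y → Prop
  | .inl x, .inl x' => x ≤ x'
  | .inr y, .inr y' => y ≤ y'
  | .inl x, .inr y => ∃ x' y', x ≤ x' ∧ R x' y' ∧ y' ≤ y
  | .inr _, .inl _ => False

/-- Removing the points of `Y` from `B(R)` in reverse order of a linear extension:
at the moment `y_i` is removed, its strict down-set in the current subposet consists
only of elements of `X` and equals the open hull of `R⁻¹(U_{y_i})`. -/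
theorem stmt19 {X Y : Type*} [PartialOrder X] [PartialOrder Y]
    [Fintype X] [Fintype Y] (R : X → Y → Prop) {n : ℕ} (e : Fin n → Y)
    (hbij : Function.Bijective e) (hext : ∀ i j : Fin n, e i ≤ e j → i ≤ j)
    (i : Fin n) :
    {a : X ⊕ Y | (∀ j : Fin n, j < i → a ≠ Sum.inr (e j)) ∧
        cylLe R a (.inr (e i)) ∧ a ≠ Sum.inr (e i)} =
      Sum.inl '' {x : X | ∃ x' y', x ≤ x' ∧ R x' y' ∧ y' ≤ e i} := by
  ext a
  cases a with
  | inl x =>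
    simp only [Set.mem_setOf_eq, Set.mem_image]
    constructor
    · rintro ⟨-, h, -⟩
      exact ⟨x, h, rfl⟩
    · rintro ⟨x', hx', hx⟩
      cases hx
      exact ⟨fun j _ h => by simp at h, hx', by simp⟩
  | inr y =>
    simp only [Set.mem_setOf_eq, Set.mem_image]
    constructor
    · rintro ⟨h1, h2, h3⟩
      obtain ⟨j, rfl⟩ := hbij.surjective y
      have hji : j ≤ i := hext j i h2
      have : j ≠ i := fun h => h3 (by rw [h])
      exact absurd rfl (h1 j (lt_of_le_of_ne hji this))
    · rintro ⟨x, -, h⟩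
      exact absurd h (by simp)
end
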